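/- arXiv:2005.06571 — 2 statements merged into one kernel-verified Lean document; each statement's English description precedes it below -/
import Mathlib

section
/- Let σ^S : ℝ³ → ℝ be differentiable with σ^S(x) > 0 for all x, let σ^A, G : ℝ³ → ℝ, and let Δt > 0. Let ρ^{n−1/2}, ρⁿ : ℝ³ → ℝ with ρ^{n−1/2} twice differentiable, and define gⁿ(x, v) := −(v·∇ρ^{n−1/2}(x))/σ^S(x), ρ^{n+1/2}(x) := ρⁿ(x) + (Δt/2)( −(1/(4π)) ∇ₓ·(∫_{S²} v gⁿ(x, v) dμ(v)) − σ^A(x) ρⁿ(x) + G(x) ). Assume ρ^{n+1/2} is twice differentiable, define g^{n+1/2}(x, v) := −(v·∇ρ^{n+1/2}(x))/σ^S(x) and ρⁿ⁺¹(x) := ρⁿ(x) + Δt·( −(1/(4π)) ∇ₓ·(∫_{S²} v g^{n+1/2}(x, v) dμ(v)) − σ^A(x) ρ^{n+1/2}(x) + G(x) ). Then (ρ^{n+1/2} − ρⁿ)/(Δt/2) = ∇·((1/(3σ^S))∇ρ^{n−1/2}) − σ^A ρⁿ + G and (ρⁿ⁺¹ − ρⁿ)/Δt = ∇·((1/(3σ^S))∇ρ^{n+1/2})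 − σ^A ρ^{n+1/2} + G pointwise; that is, the limiting updates constitute a second-order explicit Runge–Kutta step for the diffusion equation ∂ₜρ = ∇·((1/(3σ^S))∇ρ) − σ^A ρ + G. -/
open MeasureTheory Real

abbrev UnitSphere : Type := Metric.sphere (0 : EuclideanSpace ℝ (Fin 3)) 1

/-- The surface measure on `S²`, of total mass `4π`. -/
noncomputable def sphereMeasure : Measure UnitSphere :=
  (volume : Measure (EuclideanSpace ℝ (Fin 3))).toSphere

noncomputable def div3 (F : EuclideanSpace ℝ (Fin 3) → EuclideanSpace ℝ (Fin 3))
    (x : EuclideanSpace ℝ (Fin 3)) : ℝ :=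
  ∑ i : Fin 3, fderiv ℝ F x (EuclideanSpace.single i 1) i

/-!
The surface measure on the unit sphere is invariant under linear isometries (it is the cone
measure of Lebesgue measure). Invariance under coordinate reflections kills the off-diagonal
second moments `∫ vᵢ vⱼ`, invariance under coordinate swaps makes the diagonal ones equal, and
since `∑ vᵢ² = 1` their sum is the total mass `n · vol(Bⁿ)`. Hence `∫ ⟨v, w⟩ v = vol(Bⁿ) w`,
which for `n = 3` is `(4π/3) w`. With `g = −⟨v, ∇ρ⟩ / σ` the flux `−(1/4π) ∫ v g` is therefore
`(1/(3σ)) ∇ρ`, and both macro updates become the diffusion updates.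
-/

open Metric Set
open scoped Pointwise

namespace LinearIsometryEquiv

variable {E : Type*} [NormedAddCommGroup E] [NormedSpace ℝ E]

def unitSphereHomeomorph (L : E ≃ₗᵢ[ℝ] E) : sphere (0 : E) 1 ≃ₜ sphere (0 : E) 1 :=
  L.toHomeomorph.subtype fun x => by simp

@[simp]
lemma coe_unitSphereHomeomorph_apply (L : E ≃ₗᵢ[ℝ] E) (v : sphere (0 : E) 1) :
    (L.unitSphereHomeomorph v : E) = L v := rfl

@[simp]
lemma coe_unitSphereHomeomorph_symm_apply (L : E ≃ₗᵢ[ℝ] E) (v : sphere (0 : E) 1) :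
    (L.unitSphereHomeomorph.symm v : E) = L.symm v := rfl

variable [MeasurableSpace E] [BorelSpace E]

lemma measurePreserving_unitSphereHomeomorph {μ : Measure E} (L : E ≃ₗᵢ[ℝ] E)
    (hL : MeasurePreserving L μ μ) :
    MeasurePreserving L.unitSphereHomeomorph μ.toSphere μ.toSphere := by
  refine ⟨L.unitSphereHomeomorph.continuous.measurable, Measure.ext fun s hs => ?_⟩
  have hcone : Ioo (0 : ℝ) 1 • ((↑) '' (L.unitSphereHomeomorph ⁻¹' s) : Set E)
      = L ⁻¹' (Ioo (0 : ℝ) 1 • ((↑) '' s)) := by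
    ext x
    simp only [Set.mem_smul, mem_image, mem_preimage]
    constructor
    · rintro ⟨r, hr, _, ⟨v, hv, rfl⟩, rfl⟩
      exact ⟨r, hr, _, ⟨_, hv, rfl⟩, by simp⟩
    · rintro ⟨r, hr, _, ⟨u, hu, rfl⟩, hx⟩
      refine ⟨r, hr, _, ⟨L.unitSphereHomeomorph.symm u, by simpa using hu, rfl⟩, ?_⟩
      rw [← L.symm_apply_apply x, ← hx]
      simp
  rw [Measure.map_apply L.unitSphereHomeomorph.continuous.measurable hs,
    μ.toSphere_apply' (L.unitSphereHomeomorph.continuous.measurable hs), μ.toSphere_apply' hs,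
    hcone]
  exact congrArg _
    (MeasurePreserving.measure_preimage_equiv (f := L.toHomeomorph.toMeasurableEquiv) hL _)

lemma integral_toSphere_comp_unitSphereHomeomorph {F : Type*} [NormedAddCommGroup F]
    [NormedSpace ℝ F] {μ : Measure E} (L : E ≃ₗᵢ[ℝ] E) (hL : MeasurePreserving L μ μ)
    (f : sphere (0 : E) 1 → F) :
    ∫ v, f (L.unitSphereHomeomorph v) ∂μ.toSphere = ∫ v, f v ∂μ.toSphere :=
  MeasurePreserving.integral_comp' (f := L.unitSphereHomeomorph.toMeasurableEquiv)
    (L.measurePreserving_unitSphereHomeomorph hL) f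

end LinearIsometryEquiv

namespace EuclideanSpace

variable {ι : Type*} [Fintype ι]

lemma integrable_toSphere_of_continuous {F : Type*} [NormedAddCommGroup F]
    {f : sphere (0 : EuclideanSpace ℝ ι) 1 → F} (hf : Continuous f) :
    Integrable f volume.toSphere :=
  hf.integrable_of_hasCompactSupport (.of_compactSpace f)

lemma integral_toSphere_coord_mul_coord_of_ne {i j : ι} (hij : i ≠ j) :
    ∫ v : sphere (0 : EuclideanSpace ℝ ι) 1, v.1 i * v.1 j ∂volume.toSphere = 0 := by
  classical
  let L : EuclideanSpace ℝ ι ≃ₗᵢ[ℝ] EuclideanSpace ℝ ι := LinearIsometryEquiv.piLpCongrRight 2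
    fun k => if k = i then LinearIsometryEquiv.neg ℝ else LinearIsometryEquiv.refl ℝ ℝ
  have hL : ∀ (x : EuclideanSpace ℝ ι) k, L x k = if k = i then -x k else x k := by
    intro x k
    by_cases h : k = i <;> simp [L, h]
  have h := L.integral_toSphere_comp_unitSphereHomeomorph L.measurePreserving
    fun v => v.1 i * v.1 j
  simp only [LinearIsometryEquiv.coe_unitSphereHomeomorph_apply, hL, if_pos, if_neg hij.symm,
    neg_mul, integral_neg] at h
  linarith

lemma integral_toSphere_coord_sq_eq (i j : ι) :
    ∫ v : sphere (0 : EuclideanSpace ℝ ι) 1, v.1 i ^ 2 ∂volume.toSphere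
      = ∫ v : sphere (0 : EuclideanSpace ℝ ι) 1, v.1 j ^ 2 ∂volume.toSphere := by
  classical
  let L : EuclideanSpace ℝ ι ≃ₗᵢ[ℝ] EuclideanSpace ℝ ι :=
    LinearIsometryEquiv.piLpCongrLeft 2 ℝ ℝ (Equiv.swap i j)
  have hL : ∀ (x : EuclideanSpace ℝ ι) k, L x k = x (Equiv.swap i j k) := by
    intro x k
    simp [L, LinearIsometryEquiv.piLpCongrLeft_apply, Equiv.piCongrLeft'_apply, Equiv.symm_swap]
  rw [← L.integral_toSphere_comp_unitSphereHomeomorph L.measurePreserving]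
  simp only [LinearIsometryEquiv.coe_unitSphereHomeomorph_apply, hL, Equiv.swap_apply_left]

lemma integral_toSphere_coord_sq (i : ι) :
    ∫ v : sphere (0 : EuclideanSpace ℝ ι) 1, v.1 i ^ 2 ∂volume.toSphere
      = volume.real (ball (0 : EuclideanSpace ℝ ι) 1) := by
  have hsum : ∑ k, ∫ v : sphere (0 : EuclideanSpace ℝ ι) 1, v.1 k ^ 2 ∂volume.toSphere
      = Fintype.card ι * volume.real (ball (0 : EuclideanSpace ℝ ι) 1) := by
    rw [← integral_finsetSum _ fun k _ => integrable_toSphere_of_continuous (by fun_prop)]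
    have hnorm : ∀ v : sphere (0 : EuclideanSpace ℝ ι) 1, ∑ k, v.1 k ^ 2 = 1 := fun v => by
      rw [← real_norm_sq_eq, norm_eq_of_mem_sphere v, one_pow]
    simp only [hnorm, integral_const, smul_eq_mul, mul_one, Measure.toSphere_real_apply_univ,
      finrank_euclideanSpace]
  simp only [integral_toSphere_coord_sq_eq _ i, Finset.sum_const, Finset.card_univ,
    nsmul_eq_mul] at hsum
  have hcard : (Fintype.card ι : ℝ) ≠ 0 := Nat.cast_ne_zero.2 (Fintype.card_pos_iff.2 ⟨i⟩).ne'
  exact mul_left_cancel₀ hcard hsum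

lemma integral_toSphere_coord_mul_coord [DecidableEq ι] (i j : ι) :
    ∫ v : sphere (0 : EuclideanSpace ℝ ι) 1, v.1 i * v.1 j ∂volume.toSphere
      = if i = j then volume.real (ball (0 : EuclideanSpace ℝ ι) 1) else 0 := by
  split_ifs with hij
  · simp only [hij, ← sq, integral_toSphere_coord_sq]
  · exact integral_toSphere_coord_mul_coord_of_ne hij

lemma integral_toSphere_inner_smul (w : EuclideanSpace ℝ ι) :
    ∫ v : sphere (0 : EuclideanSpace ℝ ι) 1, inner ℝ v.1 w • v.1 ∂volume.toSphere
      = volume.real (ball (0 : EuclideanSpace ℝ ι) 1) • w := by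
  classical
  ext i
  have hcoord : (∫ v : sphere (0 : EuclideanSpace ℝ ι) 1, inner ℝ v.1 w • v.1 ∂volume.toSphere) i
      = ∫ v : sphere (0 : EuclideanSpace ℝ ι) 1, ∑ j, w j * (v.1 j * v.1 i) ∂volume.toSphere := by
    change proj (𝕜 := ℝ) i _ = _
    rw [← (proj (𝕜 := ℝ) i).integral_comp_comm
      (integrable_toSphere_of_continuous (f := fun v => inner ℝ v.1 w • v.1) (by fun_prop))]
    congr with v
    simp only [coe_proj, PiLp.smul_apply, smul_eq_mul, PiLp.inner_apply, RCLike.inner_apply,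
      conj_trivial, Finset.sum_mul]
    exact Finset.sum_congr rfl fun j _ => by ring
  rw [hcoord, integral_finsetSum _ fun j _ => integrable_toSphere_of_continuous (by fun_prop)]
  simp [integral_const_mul, integral_toSphere_coord_mul_coord, mul_comm]

end EuclideanSpace

local notation "E3" => EuclideanSpace ℝ (Fin 3)

lemma volume_real_ball_fin_three : volume.real (ball (0 : E3) 1) = 4 * π / 3 := by
  rw [measureReal_def, EuclideanSpace.volume_ball_fin_three, ENNReal.ofReal_one, one_pow, one_mul,
    ENNReal.toReal_ofReal (by positivity)]
  ring

lemma integral_sphereMeasure_inner_smul (w : E3) :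
    ∫ v : UnitSphere, inner ℝ (v : E3) w • (v : E3) ∂sphereMeasure = (4 * π / 3) • w := by
  rw [sphereMeasure, EuclideanSpace.integral_toSphere_inner_smul, volume_real_ball_fin_three]

-- No differentiability is needed: for `c ≠ 0`, `c • F` is differentiable exactly when `F` is.
lemma div3_const_smul (c : ℝ) (F : E3 → E3) (x : E3) :
    div3 (fun y => c • F y) x = c * div3 F x := by
  rw [div3, div3, show (fun y => c • F y) = c • F from rfl, fderiv_const_smul_field,
    Finset.mul_sum]
  rfl

lemma neg_inv_four_pi_mul_div3_integral_smul {σS ρ : E3 → ℝ} {g : E3 → UnitSphere → ℝ}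
    (hg : ∀ x (v : UnitSphere), g x v = -(inner ℝ (v : E3) (gradient ρ x) : ℝ) / σS x) (x : E3) :
    -(1 / (4 * π)) * div3 (fun y => ∫ v : UnitSphere, g y v • (v : E3) ∂sphereMeasure) x
      = div3 (fun y => (1 / (3 * σS y)) • gradient ρ y) x := by
  have hflux : ∀ y, ∫ v : UnitSphere, g y v • (v : E3) ∂sphereMeasure
      = (-(4 * π)) • ((1 / (3 * σS y)) • gradient ρ y) := fun y => by
    have hpt : ∀ v : UnitSphere, g y v • (v : E3)
        = (-(σS y)⁻¹) • (inner ℝ (v : E3) (gradient ρ y) • (v : E3)) := fun v => by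
      rw [hg, smul_smul, neg_div, div_eq_inv_mul, neg_mul, mul_comm]
    rw [funext hpt, integral_smul, integral_sphereMeasure_inner_smul, smul_smul, smul_smul]
    congr 1
    ring
  simp only [hflux, div3_const_smul]
  field_simp

theorem ap_limit_second_order_RK_general
    (σS : EuclideanSpace ℝ (Fin 3) → ℝ)
    (σA G : EuclideanSpace ℝ (Fin 3) → ℝ)
    (Δt : ℝ) (hΔt : 0 < Δt)
    (ρhalfminus ρn : EuclideanSpace ℝ (Fin 3) → ℝ)
    (gn : EuclideanSpace ℝ (Fin 3) → UnitSphere → ℝ)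
    (hgn : ∀ x (v : UnitSphere),
      gn x v = -(inner ℝ (v : EuclideanSpace ℝ (Fin 3)) (gradient ρhalfminus x) : ℝ) / σS x)
    (ρhalfplus : EuclideanSpace ℝ (Fin 3) → ℝ)
    (hρhp_def : ∀ x, ρhalfplus x = ρn x + (Δt / 2) *
      (-(1 / (4 * π)) *
          div3 (fun y => ∫ v : UnitSphere,
            gn y v • (v : EuclideanSpace ℝ (Fin 3)) ∂sphereMeasure) x
        - σA x * ρn x + G x))
    (ghalf : EuclideanSpace ℝ (Fin 3) → UnitSphere → ℝ)
    (hghalf : ∀ x (v : UnitSphere),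
      ghalf x v = -(inner ℝ (v : EuclideanSpace ℝ (Fin 3)) (gradient ρhalfplus x) : ℝ) / σS x)
    (ρnext : EuclideanSpace ℝ (Fin 3) → ℝ)
    (hnext : ∀ x, ρnext x = ρn x + Δt *
      (-(1 / (4 * π)) *
          div3 (fun y => ∫ v : UnitSphere,
            ghalf y v • (v : EuclideanSpace ℝ (Fin 3)) ∂sphereMeasure) x
        - σA x * ρhalfplus x + G x)) :
    (∀ x, (ρhalfplus x - ρn x) / (Δt / 2)
      = div3 (fun y => (1 / (3 * σS y)) • gradient ρhalfminus y) x
        - σA x * ρn x + G x) ∧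
    (∀ x, (ρnext x - ρn x) / Δt
      = div3 (fun y => (1 / (3 * σS y)) • gradient ρhalfplus y) x
        - σA x * ρhalfplus x + G x) := by
  refine ⟨fun x => ?_, fun x => ?_⟩
  · rw [hρhp_def x, add_sub_cancel_left, mul_div_cancel_left₀ _ (by positivity),
      neg_inv_four_pi_mul_div3_integral_smul hgn]
  · rw [hnext x, add_sub_cancel_left, mul_div_cancel_left₀ _ hΔt.ne',
      neg_inv_four_pi_mul_div3_integral_smul hghalf]

/-- Asymptotic-preserving property of the second-order scheme: with the limiting micro
parts `gⁿ = −(v·∇ρ^{n−1/2})/σ^S` and `g^{n+1/2} = −(v·∇ρ^{n+1/2})/σ^S`, the two macro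
updates constitute a second-order explicit Runge–Kutta step for the diffusion equation
`∂ₜρ = ∇·((1/(3σ^S))∇ρ) − σ^A ρ + G`. -/
theorem ap_limit_second_order_RK
    (σS : EuclideanSpace ℝ (Fin 3) → ℝ) (hσS_diff : Differentiable ℝ σS)
    (hσS_pos : ∀ x, 0 < σS x)
    (σA G : EuclideanSpace ℝ (Fin 3) → ℝ)
    (Δt : ℝ) (hΔt : 0 < Δt)
    (ρhalfminus ρn : EuclideanSpace ℝ (Fin 3) → ℝ)
    (hρhm : Differentiable ℝ ρhalfminus)
    (hρhm2 : Differentiable ℝ fun x => gradient ρhalfminus x)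
    (gn : EuclideanSpace ℝ (Fin 3) → UnitSphere → ℝ)
    (hgn : ∀ x (v : UnitSphere),
      gn x v = -(inner ℝ (v : EuclideanSpace ℝ (Fin 3)) (gradient ρhalfminus x) : ℝ) / σS x)
    (ρhalfplus : EuclideanSpace ℝ (Fin 3) → ℝ)
    (hρhp_def : ∀ x, ρhalfplus x = ρn x + (Δt / 2) *
      (-(1 / (4 * π)) *
          div3 (fun y => ∫ v : UnitSphere,
            gn y v • (v : EuclideanSpace ℝ (Fin 3)) ∂sphereMeasure) x
        - σA x * ρn x + G x))
    (hρhp : Differentiable ℝ ρhalfplus)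
    (hρhp2 : Differentiable ℝ fun x => gradient ρhalfplus x)
    (ghalf : EuclideanSpace ℝ (Fin 3) → UnitSphere → ℝ)
    (hghalf : ∀ x (v : UnitSphere),
      ghalf x v = -(inner ℝ (v : EuclideanSpace ℝ (Fin 3)) (gradient ρhalfplus x) : ℝ) / σS x)
    (ρnext : EuclideanSpace ℝ (Fin 3) → ℝ)
    (hnext : ∀ x, ρnext x = ρn x + Δt *
      (-(1 / (4 * π)) *
          div3 (fun y => ∫ v : UnitSphere,
            ghalf y v • (v : EuclideanSpace ℝ (Fin 3)) ∂sphereMeasure) x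
        - σA x * ρhalfplus x + G x)) :
    (∀ x, (ρhalfplus x - ρn x) / (Δt / 2)
      = div3 (fun y => (1 / (3 * σS y)) • gradient ρhalfminus y) x
        - σA x * ρn x + G x) ∧
    (∀ x, (ρnext x - ρn x) / Δt
      = div3 (fun y => (1 / (3 * σS y)) • gradient ρhalfplus y) x
        - σA x * ρhalfplus x + G x) :=
  ap_limit_second_order_RK_general σS σA G Δt hΔt ρhalfminus ρn gn hgn ρhalfplus hρhp_def ghalf
    hghalf ρnext hnext
end

section
/- Let Δt, Δx, Δy > 0. Let ρ : ℤ² → ℝ (vertex values ρ_{k,l}), ρc : ℤ² → ℝ (cell-center values, ρc_{k,l} standing for ρ_{k+1/2, l+1/2}), and let σx, σy : ℤ² → ℝ be nowhere zero (σx_{k,l} standing for σ^S_{k+1/2,l} and σy_{k,l} for σ^S_{k,l+1/2}). For v = (v₁, v₂, v₃) ∈ S² define the face values g^x_{k,l}(v) := −(1/σx_{k,l})( v₁ (ρ_{k+1,l} − ρ_{k,l})/Δx + v₂ (ρc_{k,l} − ρc_{k,l−1})/Δy ) and g^y_{k,l}(v) := −(1/σy_{k,l})( v₁ (ρc_{k,l}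 − ρc_{k−1,l})/Δx + v₂ (ρ_{k,l+1} − ρ_{k,l})/Δy ). Then for all (k, l) ∈ ℤ²: −(1/(4π))[ (1/Δx) ∫_{S²} v₁ (g^x_{k,l}(v) − g^x_{k−1,l}(v)) dμ(v) + (1/Δy) ∫_{S²} v₂ (g^y_{k,l}(v) − g^y_{k,l−1}(v)) dμ(v) ] = (1/3)(1/Δx²)( (ρ_{k+1,l} − ρ_{k,l})/σx_{k,l} − (ρ_{k,l} − ρ_{k−1,l})/σx_{k−1,l} ) + (1/3)(1/Δy²)( (ρ_{k,l+1} − ρ_{k,l})/σy_{k,l} − (ρ_{k,l} − ρ_{k,l−1})/σy_{k,l−1} ). -/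
open MeasureTheory Real

/-!
Only the second moments of the sphere enter: every reflection and coordinate permutation of `ℝ³`
preserves the surface measure, so `∫ vᵢ vⱼ dμ = 0` for `i ≠ j` and the three `∫ vᵢ² dμ` agree,
hence each equals `|S²| / 3 = 4π/3` because `v₁² + v₂² + v₃² = 1`. The face values `g^x, g^y`
are linear in `v`, so only the `v₁`-coefficient of `g^x` and the `v₂`-coefficient of `g^y`
survive the integration, and the `ρc` terms drop out.
-/

open Metric Set Pointwise

lemma LinearEquiv.preimage_set_smul {R M N : Type*} [Semiring R] [AddCommMonoid M] [Module R M]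
    [AddCommMonoid N] [Module R N] (e : M ≃ₗ[R] N) (s : Set R) (t : Set N) :
    e ⁻¹' (s • t) = s • e ⁻¹' t := by
  ext x
  simp only [mem_smul, mem_preimage]
  constructor
  · rintro ⟨a, ha, y, hy, hx⟩
    exact ⟨a, ha, e.symm y, by simpa using hy, by rw [← e.symm.map_smul, hx, e.symm_apply_apply]⟩
  · rintro ⟨a, ha, y, hy, rfl⟩
    exact ⟨a, ha, e y, hy, (e.map_smul a y).symm⟩

lemma Continuous.integrable_of_compactSpace {X E : Type*} [TopologicalSpace X] [CompactSpace X]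
    [MeasurableSpace X] [OpensMeasurableSpace X] {μ : Measure X} [IsFiniteMeasure μ]
    [NormedAddCommGroup E] {f : X → E} (hf : Continuous f) : Integrable f μ :=
  hf.integrable_of_hasCompactSupport (HasCompactSupport.of_compactSpace f)

namespace LinearIsometryEquiv

variable {E : Type*} [NormedAddCommGroup E] [NormedSpace ℝ E] [MeasurableSpace E] [BorelSpace E]

noncomputable def restrictUnitSphere (e : E ≃ₗᵢ[ℝ] E) : sphere (0 : E) 1 ≃ᵐ sphere (0 : E) 1 :=
  (e.toHomeomorph.subtype fun x => by simp).toMeasurableEquiv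

@[simp]
lemma coe_restrictUnitSphere_apply (e : E ≃ₗᵢ[ℝ] E) (v : sphere (0 : E) 1) :
    (e.restrictUnitSphere v : E) = e v := rfl

lemma image_coe_preimage_restrictUnitSphere (e : E ≃ₗᵢ[ℝ] E) (s : Set (sphere (0 : E) 1)) :
    ((↑) '' (e.restrictUnitSphere ⁻¹' s) : Set E) = e ⁻¹' ((↑) '' s) := by
  ext x
  constructor
  · rintro ⟨v, hv, rfl⟩
    exact ⟨_, hv, rfl⟩
  · rintro ⟨w, hw, hwx⟩
    have hx : x ∈ sphere (0 : E) 1 := by simpa [hwx] using w.2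
    have hxw : e.restrictUnitSphere ⟨x, hx⟩ = w := Subtype.ext hwx.symm
    exact ⟨⟨x, hx⟩, by rwa [mem_preimage, hxw], rfl⟩

theorem measurePreserving_restrictUnitSphere (e : E ≃ₗᵢ[ℝ] E) {μ : Measure E}
    (hμ : MeasurePreserving e μ μ) :
    MeasurePreserving e.restrictUnitSphere μ.toSphere μ.toSphere := by
  refine ⟨e.restrictUnitSphere.measurable, Measure.ext fun s hs => ?_⟩
  rw [Measure.map_apply e.restrictUnitSphere.measurable hs, Measure.toSphere_apply' _ hs,
    Measure.toSphere_apply' _ (e.restrictUnitSphere.measurable hs),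
    image_coe_preimage_restrictUnitSphere, ← coe_toLinearEquiv, ← LinearEquiv.preimage_set_smul]
  exact congrArg _ (hμ.measure_preimage_equiv (f := e.toHomeomorph.toMeasurableEquiv) _)

end LinearIsometryEquiv

section EuclideanSphere

variable {ι : Type*} [Fintype ι] {ν : Measure (sphere (0 : EuclideanSpace ℝ ι) 1)}
  (hν : ∀ e : EuclideanSpace ℝ ι ≃ₗᵢ[ℝ] EuclideanSpace ℝ ι,
    MeasurePreserving e.restrictUnitSphere ν ν)
include hν

lemma integral_unitSphere_coord_mul_coord_of_ne [DecidableEq ι] {i j : ι} (hij : i ≠ j) :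
    ∫ v : sphere (0 : EuclideanSpace ℝ ι) 1, v.1 i * v.1 j ∂ν = 0 := by
  let e : EuclideanSpace ℝ ι ≃ₗᵢ[ℝ] EuclideanSpace ℝ ι := LinearIsometryEquiv.piLpCongrRight 2
    fun m => if m = i then LinearIsometryEquiv.neg ℝ else LinearIsometryEquiv.refl ℝ ℝ
  have := (hν e).integral_comp' fun v => v.1 i * v.1 j
  simp only [e, LinearIsometryEquiv.coe_restrictUnitSphere_apply,
    LinearIsometryEquiv.piLpCongrRight_apply, if_pos, hij.symm, if_false,
    LinearIsometryEquiv.coe_neg, LinearIsometryEquiv.coe_refl, id_eq, neg_mul, integral_neg] at this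
  linarith

lemma integral_unitSphere_coord_sq_eq [DecidableEq ι] (i j : ι) :
    ∫ v : sphere (0 : EuclideanSpace ℝ ι) 1, v.1 i ^ 2 ∂ν
      = ∫ v : sphere (0 : EuclideanSpace ℝ ι) 1, v.1 j ^ 2 ∂ν := by
  have := (hν (LinearIsometryEquiv.piLpCongrLeft 2 ℝ ℝ (Equiv.swap i j))).integral_comp'
    fun v => v.1 j ^ 2
  simpa [LinearIsometryEquiv.piLpCongrLeft_apply, Equiv.piCongrLeft'_apply] using this

variable [IsFiniteMeasure ν]

lemma integral_unitSphere_coord_sq (i : ι) :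
    ∫ v : sphere (0 : EuclideanSpace ℝ ι) 1, v.1 i ^ 2 ∂ν = ν.real univ / Fintype.card ι := by
  classical
  have hsum : ∑ j, ∫ v : sphere (0 : EuclideanSpace ℝ ι) 1, v.1 j ^ 2 ∂ν = ν.real univ := by
    have hnorm (v : sphere (0 : EuclideanSpace ℝ ι) 1) : ∑ j, v.1 j ^ 2 = 1 := by
      rw [← EuclideanSpace.real_norm_sq_eq, norm_eq_of_mem_sphere, one_pow]
    rw [← integral_finsetSum _ fun j _ => (by fun_prop : Continuous _).integrable_of_compactSpace]
    simp [hnorm]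
  rw [Finset.sum_congr rfl fun j _ => integral_unitSphere_coord_sq_eq hν j i, Finset.sum_const,
    Finset.card_univ, nsmul_eq_mul] at hsum
  have hcard : (Fintype.card ι : ℝ) ≠ 0 :=
    Nat.cast_ne_zero.mpr (Fintype.card_pos_iff.mpr ⟨i⟩).ne'
  rw [← hsum, mul_div_cancel_left₀ _ hcard]

lemma integral_unitSphere_coord_mul_coord [DecidableEq ι] (i j : ι) :
    ∫ v : sphere (0 : EuclideanSpace ℝ ι) 1, v.1 i * v.1 j ∂ν
      = if i = j then ν.real univ / Fintype.card ι else 0 := by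
  split_ifs with hij
  · simp_rw [hij, ← sq, integral_unitSphere_coord_sq hν]
  · exact integral_unitSphere_coord_mul_coord_of_ne hν hij

lemma integral_unitSphere_coord_mul_sum (i : ι) (a : ι → ℝ) :
    ∫ v : sphere (0 : EuclideanSpace ℝ ι) 1, v.1 i * ∑ j, a j * v.1 j ∂ν
      = a i * (ν.real univ / Fintype.card ι) := by
  classical
  simp_rw [Finset.mul_sum, mul_left_comm _ (a _)]
  rw [integral_finsetSum _ fun j _ => (by fun_prop : Continuous _).integrable_of_compactSpace]
  simp_rw [integral_const_mul, integral_unitSphere_coord_mul_coord hν, mul_ite, mul_zero,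
    Finset.sum_ite_eq, Finset.mem_univ, if_true]

end EuclideanSphere

instance : IsFiniteMeasure sphereMeasure :=
  inferInstanceAs (IsFiniteMeasure (Measure.toSphere _))

lemma sphereMeasure_real_univ : sphereMeasure.real univ = 4 * π := by
  rw [sphereMeasure, Measure.toSphere_real_apply_univ, finrank_euclideanSpace_fin,
    measureReal_def, EuclideanSpace.volume_ball_fin_three, ENNReal.ofReal_one, one_pow, one_mul,
    ENNReal.toReal_ofReal (by positivity)]
  ring

lemma integral_sphereMeasure_coord_mul_sub_sum (i : Fin 3) (a b : Fin 3 → ℝ) :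
    ∫ v : UnitSphere, v.1 i * (∑ j, a j * v.1 j - ∑ j, b j * v.1 j) ∂sphereMeasure
      = 4 * π / 3 * (a i - b i) := by
  have hν (e : EuclideanSpace ℝ (Fin 3) ≃ₗᵢ[ℝ] EuclideanSpace ℝ (Fin 3)) :
      MeasurePreserving e.restrictUnitSphere sphereMeasure sphereMeasure :=
    e.measurePreserving_restrictUnitSphere e.measurePreserving
  simp_rw [← Finset.sum_sub_distrib, ← sub_mul, integral_unitSphere_coord_mul_sum hν,
    sphereMeasure_real_univ, Fintype.card_fin]
  push_cast
  ring

theorem discrete_ap_five_point_general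
    (Δx Δy : ℝ)
    (ρ ρc σx σy : ℤ → ℤ → ℝ)
    (gx gy : ℤ → ℤ → UnitSphere → ℝ)
    (hgx : ∀ k l (v : UnitSphere), gx k l v
      = -(1 / σx k l) * ((v : EuclideanSpace ℝ (Fin 3)) 0 * (ρ (k + 1) l - ρ k l) / Δx
          + (v : EuclideanSpace ℝ (Fin 3)) 1 * (ρc k l - ρc k (l - 1)) / Δy))
    (hgy : ∀ k l (v : UnitSphere), gy k l v
      = -(1 / σy k l) * ((v : EuclideanSpace ℝ (Fin 3)) 0 * (ρc k l - ρc (k - 1) l) / Δx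
          + (v : EuclideanSpace ℝ (Fin 3)) 1 * (ρ k (l + 1) - ρ k l) / Δy)) :
    ∀ k l : ℤ,
      -(1 / (4 * π)) *
        ((1 / Δx) * ∫ v : UnitSphere,
            (v : EuclideanSpace ℝ (Fin 3)) 0 * (gx k l v - gx (k - 1) l v) ∂sphereMeasure
          + (1 / Δy) * ∫ v : UnitSphere,
            (v : EuclideanSpace ℝ (Fin 3)) 1 * (gy k l v - gy k (l - 1) v) ∂sphereMeasure)
      = (1 / 3) * (1 / Δx ^ 2) *
            ((ρ (k + 1) l - ρ k l) / σx k l - (ρ k l - ρ (k - 1) l) / σx (k - 1) l)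
        + (1 / 3) * (1 / Δy ^ 2) *
            ((ρ k (l + 1) - ρ k l) / σy k l - (ρ k l - ρ k (l - 1)) / σy k (l - 1)) := by
  have hgx_sum (k l : ℤ) (v : UnitSphere) : gx k l v = ∑ j,
      ![-(ρ (k + 1) l - ρ k l) / (σx k l * Δx), -(ρc k l - ρc k (l - 1)) / (σx k l * Δy), 0] j
        * v.1 j := by
    simp only [hgx, Fin.sum_univ_three, Matrix.cons_val_zero, Matrix.cons_val_one, Matrix.cons_val,
      zero_mul, add_zero]
    ring
  have hgy_sum (k l : ℤ) (v : UnitSphere) : gy k l v = ∑ j,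
      ![-(ρc k l - ρc (k - 1) l) / (σy k l * Δx), -(ρ k (l + 1) - ρ k l) / (σy k l * Δy), 0] j
        * v.1 j := by
    simp only [hgy, Fin.sum_univ_three, Matrix.cons_val_zero, Matrix.cons_val_one, Matrix.cons_val,
      zero_mul, add_zero]
    ring
  intro k l
  simp_rw [hgx_sum, hgy_sum, integral_sphereMeasure_coord_mul_sub_sum]
  simp only [Matrix.cons_val_zero, Matrix.cons_val_one, sub_add_cancel]
  field_simp
  ring

/-- Asymptotic-preserving property of the fully discrete staggered-grid scheme:
substituting the `ε → 0` limit of the micro part into the discrete macro update yields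
the standard explicit 5-point finite difference discretization of the diffusion
operator `∇·((1/(3σ^S))∇ρ)`. -/
theorem discrete_ap_five_point
    (Δt Δx Δy : ℝ) (hΔt : 0 < Δt) (hΔx : 0 < Δx) (hΔy : 0 < Δy)
    (ρ ρc σx σy : ℤ → ℤ → ℝ)
    (hσx : ∀ k l, σx k l ≠ 0) (hσy : ∀ k l, σy k l ≠ 0)
    (gx gy : ℤ → ℤ → UnitSphere → ℝ)
    (hgx : ∀ k l (v : UnitSphere), gx k l v
      = -(1 / σx k l) * ((v : EuclideanSpace ℝ (Fin 3)) 0 * (ρ (k + 1) l - ρ k l) / Δx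
          + (v : EuclideanSpace ℝ (Fin 3)) 1 * (ρc k l - ρc k (l - 1)) / Δy))
    (hgy : ∀ k l (v : UnitSphere), gy k l v
      = -(1 / σy k l) * ((v : EuclideanSpace ℝ (Fin 3)) 0 * (ρc k l - ρc (k - 1) l) / Δx
          + (v : EuclideanSpace ℝ (Fin 3)) 1 * (ρ k (l + 1) - ρ k l) / Δy)) :
    ∀ k l : ℤ,
      -(1 / (4 * π)) *
        ((1 / Δx) * ∫ v : UnitSphere,
            (v : EuclideanSpace ℝ (Fin 3)) 0 * (gx k l v - gx (k - 1) l v) ∂sphereMeasure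
          + (1 / Δy) * ∫ v : UnitSphere,
            (v : EuclideanSpace ℝ (Fin 3)) 1 * (gy k l v - gy k (l - 1) v) ∂sphereMeasure)
      = (1 / 3) * (1 / Δx ^ 2) *
            ((ρ (k + 1) l - ρ k l) / σx k l - (ρ k l - ρ (k - 1) l) / σx (k - 1) l)
        + (1 / 3) * (1 / Δy ^ 2) *
            ((ρ k (l + 1) - ρ k l) / σy k l - (ρ k l - ρ k (l - 1)) / σy k (l - 1)) :=
  discrete_ap_five_point_general Δx Δy ρ ρc σx σy gx gy hgx hgy
end
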